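/- arXiv:2007.05437 — 2 statements merged into one kernel-verified Lean document; each statement's English description precedes it below -/
import Mathlib

section
/- Let G be a finite simple graph and v a vertex. If an edge e of G has trussness τ_G(e) < k+1 (i.e., e is not contained in any connected subgraph of G in which every edge has support at least k-1), then for every vertex u, the edge e is not contained in any connected k-truss of the ego-network G_{N(u)}. -/
/-! Coning off a truss of the ego-network `G_{N(u)}` from its centre `u` gives a subgraph of `G`:
every old edge gains the common neighbour `u`, and a new edge `u w` has as common neighbours all
neighbours of `w` in the truss, of which there are at least one more than the support of any
edge at `w`. So a connected `k`-truss of `G_{N(u)}` through `e` becomes a connected `(k+1)`-truss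
of `G` through `e`. -/

open SimpleGraph

/-- The support of an edge `(u,v)` inside a subgraph `H`: the number of common
neighbors of `u` and `v` within `H`. -/
noncomputable def supS {V : Type*} {G : SimpleGraph V} (H : G.Subgraph) (u v : V) : ℕ :=
  Set.ncard {w | H.Adj u w ∧ H.Adj v w}

/-- The ego-network of `v` in `G`: the subgraph of `G` induced by the neighbors of `v`
(as a graph on the same vertex set, with all non-neighbors isolated). -/
def ego {V : Type*} (G : SimpleGraph V) (v : V) : SimpleGraph V where
  Adj a b := G.Adj a b ∧ G.Adj v a ∧ G.Adj v b
  symm := ⟨fun a b h => ⟨h.1.symm, h.2.2, h.2.1⟩⟩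
  loopless := ⟨fun a h => G.irrefl h.1⟩

section

variable {V : Type*} {G G' : SimpleGraph V}

lemma ego_le (u : V) : ego G u ≤ G := fun _ _ h => h.1

namespace SimpleGraph.Subgraph

lemma supS_comm (H : G.Subgraph) (x y : V) : supS H x y = supS H y x := by
  simp only [supS, and_comm]

def cone (hG : G' ≤ G) (K : G'.Subgraph) (u : V) (hu : ∀ w ∈ K.verts, G.Adj u w) :
    G.Subgraph where
  verts := insert u K.verts
  Adj x y := K.Adj x y ∨ (x = u ∧ y ∈ K.verts) ∨ (y = u ∧ x ∈ K.verts)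
  adj_sub := by
    rintro x y (h | ⟨rfl, hy⟩ | ⟨rfl, hx⟩)
    · exact hG (K.adj_sub h)
    · exact hu y hy
    · exact (hu x hx).symm
  edge_vert := by
    rintro x y (h | ⟨rfl, -⟩ | ⟨-, hx⟩)
    · exact Set.mem_insert_of_mem _ (K.edge_vert h)
    · exact Set.mem_insert _ _
    · exact Set.mem_insert_of_mem _ hx
  symm := ⟨by tauto⟩

section cone

variable {hG : G' ≤ G} {K : G'.Subgraph} {u : V} {hu : ∀ w ∈ K.verts, G.Adj u w}

lemma cone_adj_of_adj {x y : V} (h : K.Adj x y) : (cone hG K u hu).Adj x y := Or.inl h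

lemma cone_adj_apex {w : V} (hw : w ∈ K.verts) : (cone hG K u hu).Adj u w :=
  Or.inr (Or.inl ⟨rfl, hw⟩)

lemma cone_connected : (cone hG K u hu).Connected := by
  have hapex : u ∈ (cone hG K u hu).verts := Set.mem_insert _ _
  have reach : ∀ z : (cone hG K u hu).verts, (cone hG K u hu).coe.Reachable z ⟨u, hapex⟩ := by
    rintro ⟨z, hz⟩
    rcases (hz : z = u ∨ z ∈ K.verts) with rfl | hz
    · rfl
    · exact Adj.reachable (show (cone hG K u hu).Adj z u from (cone_adj_apex hz).symm)
  rw [Subgraph.connected_iff]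
  exact ⟨⟨fun x y => (reach x).trans (reach y).symm⟩, ⟨u, hapex⟩⟩

variable [Finite V]

lemma supS_lt_supS_cone {x y : V} (h : K.Adj x y) : supS K x y < supS (cone hG K u hu) x y := by
  refine Set.ncard_lt_ncard (LE.le.ssubset_of_mem_notMem (a := u) ?_ ?_ ?_)
  · exact fun w ⟨hxw, hyw⟩ => ⟨cone_adj_of_adj hxw, cone_adj_of_adj hyw⟩
  · exact ⟨(cone_adj_apex (K.edge_vert h)).symm, (cone_adj_apex (K.edge_vert h.symm)).symm⟩
  · exact fun hu' => (hu u (K.edge_vert hu'.1.symm)).ne rfl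

lemma supS_lt_supS_cone_apex {w z : V} (h : K.Adj w z) :
    supS K w z < supS (cone hG K u hu) u w :=
  calc supS K w z < (K.neighborSet w).ncard :=
        Set.ncard_lt_ncard (LE.le.ssubset_of_mem_notMem (a := z)
          (fun _ hv => hv.1) h fun hz => hz.2.ne rfl)
    _ ≤ supS (cone hG K u hu) u w :=
        Set.ncard_le_ncard fun v hv => ⟨cone_adj_apex (K.edge_vert hv.symm), cone_adj_of_adj hv⟩

lemma le_supS_cone {m : ℕ} (hK : ∀ x y, K.Adj x y → m ≤ supS K x y)
    (hnbr : ∀ w ∈ K.verts, ∃ z, K.Adj w z) {x y : V} (h : (cone hG K u hu).Adj x y) :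
    m + 1 ≤ supS (cone hG K u hu) x y := by
  rcases h with h | ⟨rfl, hy⟩ | ⟨rfl, hx⟩
  · exact (hK x y h).trans_lt (supS_lt_supS_cone h)
  · obtain ⟨z, hz⟩ := hnbr y hy
    exact (hK y z hz).trans_lt (supS_lt_supS_cone_apex hz)
  · obtain ⟨z, hz⟩ := hnbr x hx
    rw [supS_comm]
    exact (hK x z hz).trans_lt (supS_lt_supS_cone_apex hz)

end cone

lemma Connected.exists_adj_of_mem {K : G.Subgraph} (hK : K.Connected) {a b w : V}
    (hab : K.Adj a b) (hw : w ∈ K.verts) : ∃ z, K.Adj w z := by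
  have : Nontrivial K.verts :=
    ⟨⟨⟨a, K.edge_vert hab⟩, ⟨b, K.edge_vert hab.symm⟩, fun h => hab.ne (congrArg Subtype.val h)⟩⟩
  exact hK.preconnected.exists_adj_of_nontrivial ⟨w, hw⟩

end SimpleGraph.Subgraph

end

theorem stmt3_general {V : Type*} [Fintype V] (G : SimpleGraph V) (k : ℕ)
    (a b : V)
    (hlow : ¬ ∃ H : G.Subgraph, H.Connected ∧
      (∀ x y, H.Adj x y → k - 1 ≤ supS H x y) ∧ H.Adj a b) :
    ∀ u : V, ¬ ∃ K : (ego G u).Subgraph, K.Connected ∧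
      (∀ x y, K.Adj x y → k - 2 ≤ supS K x y) ∧ K.Adj a b := by
  rintro u ⟨K, hKconn, hKsupp, hKab⟩
  have hnbr : ∀ w ∈ K.verts, ∃ z, K.Adj w z := fun _ hw => hKconn.exists_adj_of_mem hKab hw
  have hu : ∀ w ∈ K.verts, G.Adj u w := fun w hw =>
    let ⟨_, hz⟩ := hnbr w hw
    (K.adj_sub hz).2.1
  refine hlow ⟨Subgraph.cone (ego_le u) K u hu, Subgraph.cone_connected, fun x y h => ?_,
    Subgraph.cone_adj_of_adj hKab⟩
  have := Subgraph.le_supS_cone hKsupp hnbr h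
  omega

theorem stmt3 {V : Type*} [Fintype V] (G : SimpleGraph V) (k : ℕ) (hk : 2 ≤ k)
    (a b : V) (hab : G.Adj a b)
    (hlow : ¬ ∃ H : G.Subgraph, H.Connected ∧
      (∀ x y, H.Adj x y → k - 1 ≤ supS H x y) ∧ H.Adj a b) :
    ∀ u : V, ¬ ∃ K : (ego G u).Subgraph, K.Connected ∧
      (∀ x y, K.Adj x y → k - 2 ≤ supS K x y) ∧ K.Adj a b :=
  stmt3_general G k a b hlow
end

section
/- Let F be a maximum-weight spanning forest of an edge-weighted graph W. Then the number of connected components of the subgraph of W formed by edges of weight at least k equals the number of connected components with at least one edge of the subgraph of F formed by edges of weight at least k. -/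
open SimpleGraph

/-- The subgraph of `G` formed by the edges of weight at least `k`
(with respect to the edge-weight function `w`). -/
def restrictW {V : Type*} (G : SimpleGraph V) (w : Sym2 V → ℕ) (k : ℕ) : SimpleGraph V where
  Adj a b := G.Adj a b ∧ k ≤ w s(a, b)
  symm := ⟨fun a b h => ⟨h.1.symm, by rw [Sym2.eq_swap]; exact h.2⟩⟩
  loopless := ⟨fun a h => G.loopless.1 a h.1⟩

/-- `F` is a spanning forest of `W`: an acyclic subgraph with the same
connected components as `W`. -/
def IsSpanningForest {V : Type*} (W F : SimpleGraph V) : Prop :=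
  F ≤ W ∧ F.IsAcyclic ∧ ∀ a b : V, F.Reachable a b ↔ W.Reachable a b

/-- The total weight of a graph: the sum of the weights of its edges. -/
noncomputable def totalWeight {V : Type*} (F : SimpleGraph V) (w : Sym2 V → ℕ) : ℕ :=
  ∑ᶠ e ∈ F.edgeSet, w e

/-!
Cycle property: if `ab` is an edge of `W`, every edge `e` on the path from `a` to `b` in the
maximum-weight spanning forest `F` has `w s(a, b) ≤ w e`, since otherwise deleting `e` and adding
`ab` yields a heavier spanning forest. Hence each edge of `W` of weight at least `k` joins vertices
already connected in `F` through edges of weight at least `k`: the two weight-`≥ k` subgraphs have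
the same reachability relation, and so the same components containing an edge.
-/

namespace SimpleGraph

variable {V : Type*}

lemma restrictW_eq_deleteEdges (G : SimpleGraph V) (w : Sym2 V → ℕ) (k : ℕ) :
    restrictW G w k = G.deleteEdges {e | w e < k} := by
  ext a b
  simp [restrictW]

lemma restrictW_mono {G H : SimpleGraph V} (h : G ≤ H) (w : Sym2 V → ℕ) (k : ℕ) :
    restrictW G w k ≤ restrictW H w k :=
  fun _ _ hab => ⟨h hab.1, hab.2⟩

lemma Walk.reachable_restrictW {G : SimpleGraph V} {a b : V} (p : G.Walk a b)
    {w : Sym2 V → ℕ} {k : ℕ} (hp : ∀ e ∈ p.edges, k ≤ w e) :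
    (restrictW G w k).Reachable a b := by
  rw [restrictW_eq_deleteEdges]
  exact ⟨p.toDeleteEdges _ fun e he => not_lt.mpr (hp e he)⟩

lemma Reachable.of_forall_adj {G H : SimpleGraph V} (h : ∀ u v, G.Adj u v → H.Reachable u v)
    {u v : V} (huv : G.Reachable u v) : H.Reachable u v := by
  obtain ⟨p⟩ := huv
  induction p with
  | nil => rfl
  | cons hadj _ ih => exact (h _ _ hadj).trans ih

lemma Reachable.deleteEdges_or {G : SimpleGraph V} {u x : V} (y : V) (h : G.Reachable u x) :
    (G.deleteEdges {s(x, y)}).Reachable u x ∨ (G.deleteEdges {s(x, y)}).Reachable u y := by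
  obtain ⟨p⟩ := h
  induction p with
  | nil => exact .inl .rfl
  | @cons u u' x hadj _ ih =>
    by_cases he : s(u, u') = s(x, y)
    · rcases Sym2.eq_iff.mp he with ⟨rfl, -⟩ | ⟨rfl, -⟩
      · exact .inl .rfl
      · exact .inr .rfl
    · have hadj' : (G.deleteEdges {s(x, y)}).Adj u u' := by simp [hadj, he]
      exact ih.imp hadj'.reachable.trans hadj'.reachable.trans

lemma IsAcyclic.not_reachable_deleteEdges_of_mem_edges {F : SimpleGraph V} (hF : F.IsAcyclic)
    {a b x y : V} {p : F.Walk a b} (hp : p.IsPath) (he : s(x, y) ∈ p.edges) :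
    ¬(F.deleteEdges {s(x, y)}).Reachable a b := by
  classical
  rw [reachable_deleteEdges_iff_exists_walk, not_exists_not]
  intro q
  have hpq : p = q.bypass :=
    congrArg Subtype.val ((hF.subsingleton_path a b).elim ⟨p, hp⟩ ⟨_, q.bypass_isPath⟩)
  exact q.edges_bypass_subset_edges (hpq ▸ he)

lemma totalWeight_sup_edge [Finite V] {G : SimpleGraph V} (w : Sym2 V → ℕ) {a b : V}
    (hab : a ≠ b) (hG : ¬G.Adj a b) :
    totalWeight (G ⊔ edge a b) w = totalWeight G w + w s(a, b) := by
  have hdisj : Disjoint G.edgeSet {s(a, b)} := Set.disjoint_singleton_right.mpr hG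
  rw [totalWeight, edgeSet_sup, edgeSet_edge_of_ne hab,
    finsum_mem_union hdisj (Set.toFinite _) (Set.finite_singleton _), finsum_mem_singleton,
    totalWeight]

lemma totalWeight_deleteEdges_add [Finite V] {G : SimpleGraph V} (w : Sym2 V → ℕ) {e : Sym2 V}
    (he : e ∈ G.edgeSet) : totalWeight (G.deleteEdges {e}) w + w e = totalWeight G w := by
  rw [totalWeight, totalWeight, edgeSet_deleteEdges, add_comm,
    ← finsum_mem_insert w (fun h => h.2 rfl) (Set.toFinite _), Set.insert_sdiff_singleton,
    Set.insert_eq_of_mem he]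

lemma card_componentsWithEdge_eq_of_le {G H : SimpleGraph V} (hle : G ≤ H)
    (hreach : ∀ u v, H.Reachable u v → G.Reachable u v) :
    Nat.card {c : G.ConnectedComponent // ∃ a b, G.Adj a b ∧ G.connectedComponentMk a = c} =
      Nat.card {c : H.ConnectedComponent // ∃ a b, H.Adj a b ∧ H.connectedComponentMk a = c} := by
  have hinj : Function.Injective (ConnectedComponent.map (Hom.ofLE hle)) := by
    refine ConnectedComponent.ind₂ fun u v huv => ?_
    exact ConnectedComponent.sound (hreach u v (ConnectedComponent.exact huv))
  let e := Equiv.ofBijective _ ⟨hinj, ConnectedComponent.surjective_map_ofLE hle⟩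
  refine Nat.card_congr (e.subtypeEquiv fun c => ?_)
  induction c using ConnectedComponent.ind with | h v => ?_
  change (∃ a b, G.Adj a b ∧ G.connectedComponentMk a = G.connectedComponentMk v) ↔
    ∃ a b, H.Adj a b ∧ H.connectedComponentMk a = H.connectedComponentMk v
  simp only [ConnectedComponent.eq]
  constructor
  · rintro ⟨a, b, hab, hav⟩
    exact ⟨a, b, hle hab, hav.mono hle⟩
  · rintro ⟨a, b, hab, hav⟩
    obtain ⟨b', hb'⟩ := (hreach a b hab.reachable).nonempty_neighborSet_left hab.ne
    exact ⟨a, b', hb', hreach a v hav⟩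

end SimpleGraph

namespace IsSpanningForest

variable {V : Type*} {W F : SimpleGraph V}

theorem sup_edge_deleteEdges (hF : IsSpanningForest W F) {a b x y : V} (hab : W.Adj a b)
    (hax : F.Reachable a x) (hsep : ¬(F.deleteEdges {s(x, y)}).Reachable a b) :
    IsSpanningForest W (F.deleteEdges {s(x, y)} ⊔ edge a b) := by
  obtain ⟨hle, hacyc, hreach⟩ := hF
  set D := F.deleteEdges {s(x, y)}
  have hDF : D ≤ F := deleteEdges_le _
  have hle' : D ⊔ edge a b ≤ W := sup_le (hDF.trans hle) ((edge_le_iff W).mpr (.inr hab))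
  -- `hsep` puts `a` and `b` on opposite sides of the cut edge `xy`, so `ab` reconnects `x` and `y`.
  have hxy' : (D ⊔ edge a b).Reachable x y := by
    have hab' : (D ⊔ edge a b).Adj a b := .inr ((edge_adj ..).mpr ⟨.inl ⟨rfl, rfl⟩, hab.ne⟩)
    have hbx : F.Reachable b x := ((hreach a b).mpr hab.reachable).symm.trans hax
    rcases hax.deleteEdges_or y, hbx.deleteEdges_or y with ⟨ha | ha, hb | hb⟩
    · exact absurd (ha.trans hb.symm) hsep
    · exact (ha.symm.mono le_sup_left).trans (hab'.reachable.trans (hb.mono le_sup_left))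
    · exact (hb.symm.mono le_sup_left).trans (hab'.reachable.symm.trans (ha.mono le_sup_left))
    · exact absurd (ha.trans hb.symm) hsep
  refine ⟨hle', (hacyc.anti hDF).sup_edge_of_not_reachable hsep, fun u v =>
    ⟨(·.mono hle'), fun huv => ((hreach u v).mpr huv).of_forall_adj fun u' v' h => ?_⟩⟩
  by_cases he : s(u', v') = s(x, y)
  · rcases Sym2.eq_iff.mp he with ⟨rfl, rfl⟩ | ⟨rfl, rfl⟩
    exacts [hxy', hxy'.symm]
  · exact (show D.Adj u' v' by simp [D, h, he]).reachable.mono le_sup_left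

theorem weight_le_of_mem_edges [Finite V] {w : Sym2 V → ℕ} (hF : IsSpanningForest W F)
    (hmax : ∀ F', IsSpanningForest W F' → totalWeight F' w ≤ totalWeight F w) {a b : V}
    (hab : W.Adj a b) {p : F.Walk a b} (hp : p.IsPath) {e : Sym2 V} (he : e ∈ p.edges) :
    w s(a, b) ≤ w e := by
  classical
  induction e using Sym2.ind with | h x y => ?_
  by_contra hlt
  have hsep := hF.2.1.not_reachable_deleteEdges_of_mem_edges hp he
  have hax : F.Reachable a x := (p.takeUntil x (p.fst_mem_support_of_mem_edges he)).reachable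
  have hle := hmax _ (hF.sup_edge_deleteEdges hab hax hsep)
  have hdel := totalWeight_deleteEdges_add w (p.edges_subset_edgeSet he)
  rw [totalWeight_sup_edge w hab.ne fun h => hsep h.reachable] at hle
  omega

theorem reachable_restrictW_of_adj [Finite V] {w : Sym2 V → ℕ} {k : ℕ}
    (hF : IsSpanningForest W F)
    (hmax : ∀ F', IsSpanningForest W F' → totalWeight F' w ≤ totalWeight F w) {a b : V}
    (hab : (restrictW W w k).Adj a b) : (restrictW F w k).Reachable a b := by
  obtain ⟨p, hp⟩ := ((hF.2.2 a b).mpr hab.1.reachable).exists_isPath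
  exact p.reachable_restrictW fun e he => hab.2.trans (hF.weight_le_of_mem_edges hmax hab.1 hp he)

end IsSpanningForest

theorem stmt8 {V : Type*} [Fintype V] (W F : SimpleGraph V) (w : Sym2 V → ℕ)
    (hsf : IsSpanningForest W F)
    (hmax : ∀ F', IsSpanningForest W F' → totalWeight F' w ≤ totalWeight F w)
    (k : ℕ) :
    Nat.card {c : (restrictW W w k).ConnectedComponent //
        ∃ a b, (restrictW W w k).Adj a b ∧ (restrictW W w k).connectedComponentMk a = c} =
    Nat.card {c : (restrictW F w k).ConnectedComponent //
        ∃ a b, (restrictW F w k).Adj a b ∧ (restrictW F w k).connectedComponentMk a = c} :=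
  (card_componentsWithEdge_eq_of_le (restrictW_mono hsf.1 w k) fun _ _ h =>
    h.of_forall_adj fun _ _ => hsf.reachable_restrictW_of_adj hmax).symm
end
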